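/- arXiv:1712.03691 — 2 statements merged into one kernel-verified Lean document; each statement's English description precedes it below -/
import Mathlib

section
/- Let ABC be a triangle with all angles less than 120° and M its Fermat point (the interior point at which all three sides subtend 120°). Then for every point X in the plane, |MA| + |MB| + |MC| ≤ |XA| + |XB| + |XC|, with equality iff X = M. -/
/-
The unit vectors `u_A, u_B, u_C` from `M` towards the vertices make pairwise angles `2π/3`, so
they sum to zero. Since `⟪P - X, u_P⟫ ≤ |XP|`, with equality at `X = M`, summing over the vertices
gives `Σ |XP| ≥ Σ |MP| + ⟪M - X, u_A + u_B + u_C⟫ = Σ |MP|`. Equality forces `X` onto both lines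
`AM` and `BM`, which meet only at `M`.
-/

open NormedSpace
open scoped RealInnerProductSpace

lemma Real.cos_two_pi_div_three : Real.cos (2 * Real.pi / 3) = -(1 / 2) := by
  rw [show 2 * Real.pi / 3 = Real.pi - Real.pi / 3 by ring, Real.cos_pi_sub, Real.cos_pi_div_three]

section

variable {V : Type*} [NormedAddCommGroup V] [InnerProductSpace ℝ V]

lemma real_inner_normalize_self (x : V) : ⟪x, normalize x⟫ = ‖x‖ := by
  rw [NormedSpace.normalize, real_inner_smul_right, real_inner_self_eq_norm_sq, sq, ← mul_assoc,
    inv_mul_mul_self]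

lemma real_inner_normalize_le_norm (x y : V) : ⟪x, normalize y⟫ ≤ ‖x‖ := by
  rcases eq_or_ne y 0 with rfl | hy
  · simp
  · simpa [norm_normalize hy] using real_inner_le_norm x (normalize y)

lemma sameRay_of_real_inner_normalize_eq_norm {x y : V} (h : ⟪x, normalize y⟫ = ‖x‖) :
    SameRay ℝ x y := by
  have hxy : ⟪x, y⟫ = ‖x‖ * ‖y‖ := by
    nth_rw 1 [← norm_smul_normalize y]
    rw [real_inner_smul_right, h, mul_comm]
  rw [sameRay_iff_norm_smul_eq, ← inner_eq_norm_mul_iff_real.mp hxy]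

lemma add_add_eq_zero_of_real_inner_eq_neg_half {u v w : V} (hu : ‖u‖ = 1) (hv : ‖v‖ = 1)
    (hw : ‖w‖ = 1) (huv : ⟪u, v⟫ = -(1 / 2)) (hvw : ⟪v, w⟫ = -(1 / 2))
    (hwu : ⟪w, u⟫ = -(1 / 2)) : u + v + w = 0 := by
  rw [← inner_self_eq_zero (𝕜 := ℝ)]
  simp only [inner_add_left, inner_add_right, real_inner_self_eq_norm_sq, hu, hv, hw,
    real_inner_comm u v, real_inner_comm v w, real_inner_comm w u, huv, hvw, hwu]
  norm_num

namespace InnerProductGeometry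

lemma real_inner_normalize_normalize {x y : V} (hx : x ≠ 0) (hy : y ≠ 0) :
    ⟪normalize x, normalize y⟫ = Real.cos (angle x y) := by
  rw [← cos_angle_mul_norm_mul_norm, norm_normalize hx, norm_normalize hy, mul_one, mul_one,
    NormedSpace.normalize, NormedSpace.normalize, angle_smul_left_of_pos _ _ (by positivity),
    angle_smul_right_of_pos _ _ (by positivity)]

lemma normalize_add_normalize_add_normalize_eq_zero {a b c : V}
    (hab : angle a b = 2 * Real.pi / 3) (hbc : angle b c = 2 * Real.pi / 3)
    (hca : angle c a = 2 * Real.pi / 3) : normalize a + normalize b + normalize c = 0 := by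
  have hne : ∀ {x y : V}, angle x y = 2 * Real.pi / 3 → x ≠ 0 := by
    rintro x y hxy rfl
    rw [angle_zero_left] at hxy
    linarith [Real.pi_pos]
  have ha := hne hab; have hb := hne hbc; have hc := hne hca
  apply add_add_eq_zero_of_real_inner_eq_neg_half (norm_normalize ha) (norm_normalize hb)
    (norm_normalize hc) <;>
  rw [real_inner_normalize_normalize (by assumption) (by assumption), ‹angle _ _ = _›,
    Real.cos_two_pi_div_three]

lemma smul_eq_zero_of_smul_eq_smul {x y : V} {r s : ℝ} (h0 : angle x y ≠ 0)
    (hπ : angle x y ≠ Real.pi) (h : r • x = s • y) : r • x = 0 := by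
  by_contra hz
  obtain ⟨hr, hx⟩ := smul_ne_zero_iff.mp hz
  obtain ⟨hs, -⟩ := smul_ne_zero_iff.mp (h ▸ hz)
  have hy : y = (r / s) • x := by rw [div_eq_inv_mul, mul_smul, h, inv_smul_smul₀ hs]
  rcases (div_ne_zero hr hs).lt_or_gt with hneg | hpos
  · exact hπ (angle_eq_pi_iff.mpr ⟨hx, _, hneg, hy⟩)
  · exact h0 (angle_eq_zero_iff.mpr ⟨hx, _, hpos, hy⟩)

end InnerProductGeometry

end

namespace EuclideanGeometry

variable {V P : Type*} [NormedAddCommGroup V] [InnerProductSpace ℝ V] [MetricSpace P]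
  [NormedAddTorsor V P]

lemma inner_vsub_normalize_vsub_le_dist (p M X : P) :
    ⟪p -ᵥ X, normalize (p -ᵥ M)⟫ ≤ dist X p := by
  rw [dist_comm, dist_eq_norm_vsub V]
  exact real_inner_normalize_le_norm _ _

lemma sum_inner_vsub_normalize_eq_sum_dist {ι : Type*} {s : Finset ι} {p : ι → P} {M : P}
    (h : ∑ i ∈ s, normalize (p i -ᵥ M) = 0) (X : P) :
    ∑ i ∈ s, ⟪p i -ᵥ X, normalize (p i -ᵥ M)⟫ = ∑ i ∈ s, dist M (p i) := by
  have hsplit : ∀ i, ⟪p i -ᵥ X, normalize (p i -ᵥ M)⟫ =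
      dist M (p i) - ⟪X -ᵥ M, normalize (p i -ᵥ M)⟫ := fun i => by
    rw [← vsub_sub_vsub_cancel_right (p i) X M, inner_sub_left, real_inner_normalize_self,
      dist_comm, dist_eq_norm_vsub V]
  rw [Finset.sum_congr rfl fun i _ => hsplit i, Finset.sum_sub_distrib, ← inner_sum, h,
    inner_zero_right, sub_zero]

theorem sum_dist_le_sum_dist_of_sum_normalize_eq_zero {ι : Type*} {s : Finset ι} {p : ι → P}
    {M : P} (h : ∑ i ∈ s, normalize (p i -ᵥ M) = 0) (X : P) :
    ∑ i ∈ s, dist M (p i) ≤ ∑ i ∈ s, dist X (p i) := by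
  rw [← sum_inner_vsub_normalize_eq_sum_dist h X]
  exact Finset.sum_le_sum fun i _ => inner_vsub_normalize_vsub_le_dist (p i) M X

theorem sameRay_of_sum_dist_eq_of_sum_normalize_eq_zero {ι : Type*} {s : Finset ι} {p : ι → P}
    {M X : P} (h : ∑ i ∈ s, normalize (p i -ᵥ M) = 0)
    (heq : ∑ i ∈ s, dist X (p i) = ∑ i ∈ s, dist M (p i)) {i : ι} (hi : i ∈ s) :
    SameRay ℝ (p i -ᵥ X) (p i -ᵥ M) := by
  rw [← sum_inner_vsub_normalize_eq_sum_dist h X, eq_comm,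
    Finset.sum_eq_sum_iff_of_le fun j _ => inner_vsub_normalize_vsub_le_dist (p j) M X] at heq
  refine sameRay_of_real_inner_normalize_eq_norm ?_
  rw [heq i hi, dist_comm, dist_eq_norm_vsub V]

lemma exists_vsub_eq_smul_of_sameRay {p M X : P} (h : SameRay ℝ (p -ᵥ X) (p -ᵥ M))
    (hpM : p ≠ M) : ∃ r : ℝ, X -ᵥ M = r • (p -ᵥ M) := by
  obtain ⟨r, -, hr⟩ := h.exists_nonneg_right (vsub_ne_zero.mpr hpM)
  exact ⟨1 - r, by rw [sub_smul, one_smul, ← hr, vsub_sub_vsub_cancel_left]⟩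

end EuclideanGeometry

open EuclideanGeometry

theorem fermat_point_minimizes_general (A B C M : EuclideanSpace ℝ (Fin 2))
    (hM1 : ∠ A M B = 2 * Real.pi / 3) (hM2 : ∠ B M C = 2 * Real.pi / 3)
    (hM3 : ∠ C M A = 2 * Real.pi / 3) :
    ∀ X : EuclideanSpace ℝ (Fin 2),
      dist M A + dist M B + dist M C ≤ dist X A + dist X B + dist X C ∧
      (dist X A + dist X B + dist X C = dist M A + dist M B + dist M C ↔ X = M) := by
  intro X
  have hsum : ∑ i, normalize (![A, B, C] i -ᵥ M) = 0 := by
    simpa [Fin.sum_univ_three] using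
      InnerProductGeometry.normalize_add_normalize_add_normalize_eq_zero hM1 hM2 hM3
  have hAM : A ≠ M := by rintro rfl; linarith [angle_self_left A B, Real.pi_pos]
  have hBM : B ≠ M := by rintro rfl; linarith [angle_self_left B C, Real.pi_pos]
  refine ⟨by simpa [Fin.sum_univ_three] using
    sum_dist_le_sum_dist_of_sum_normalize_eq_zero hsum X, fun heq => ?_, fun hXM => hXM ▸ rfl⟩
  have hray (i : Fin 3) := sameRay_of_sum_dist_eq_of_sum_normalize_eq_zero hsum
    (by simpa [Fin.sum_univ_three] using heq) (Finset.mem_univ i)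
  obtain ⟨r, hr⟩ := exists_vsub_eq_smul_of_sameRay (hray 0) hAM
  obtain ⟨s, hs⟩ := exists_vsub_eq_smul_of_sameRay (hray 1) hBM
  have hAMB0 : ∠ A M B ≠ 0 := by rw [hM1]; positivity
  have hAMBπ : ∠ A M B ≠ Real.pi := by rw [hM1]; linarith [Real.pi_pos]
  rw [← vsub_eq_zero_iff_eq, hr]
  exact InnerProductGeometry.smul_eq_zero_of_smul_eq_smul hAMB0 hAMBπ (hr.symm.trans hs)

theorem fermat_point_minimizes (A B C M : EuclideanSpace ℝ (Fin 2))
    (hABC : AffineIndependent ℝ ![A, B, C])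
    (hA : ∠ B A C < 2 * Real.pi / 3)
    (hB : ∠ A B C < 2 * Real.pi / 3)
    (hC : ∠ B C A < 2 * Real.pi / 3)
    (hMint : M ∈ interior (convexHull ℝ {A, B, C}))
    (hM1 : ∠ A M B = 2 * Real.pi / 3) (hM2 : ∠ B M C = 2 * Real.pi / 3)
    (hM3 : ∠ C M A = 2 * Real.pi / 3) :
    ∀ X : EuclideanSpace ℝ (Fin 2),
      dist M A + dist M B + dist M C ≤ dist X A + dist X B + dist X C ∧
      (dist X A + dist X B + dist X C = dist M A + dist M B + dist M C ↔ X = M) :=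
  fermat_point_minimizes_general A B C M hM1 hM2 hM3
end

section
/- Let C be the origin, a, b the position vectors of B and A in the plane, and X an interior point of triangle ABC subtending angles ψ_a at segment CB and ψ_b at segment CA, with ψ_a, ψ_b ∈ (π/2, π). The circumcenters of triangles XCB and XCA are r = (1/2)(a + cot ψ_a · a⊥) and s = (1/2)(b − cot ψ_b · b⊥), with circumradii ρ_a = (a/2)√(1 + cot²ψ_a) and ρ_b = (b/2)√(1 + cot²ψ_b), where a = ‖a‖, b = ‖b‖. -/
open EuclideanGeometry

/-- Counterclockwise rotation by 90° in the Euclidean plane. -/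
noncomputable def perp (v : EuclideanSpace ℝ (Fin 2)) : EuclideanSpace ℝ (Fin 2) :=
  (WithLp.equiv 2 (Fin 2 → ℝ)).symm ![-(v 1), v 0]

/-!
The circumcenter of `X, 0, v` lies on the perpendicular bisector of `0v`, so it is
`½ (v + c • v⊥)` for some `c`, and this point is equidistant from `X` exactly when
`c ⟪v⊥, X⟫ = ⟪X - v, X⟫`. Up to the common factor `‖v - X‖ ‖X‖`, the cosine and sine of
`∠ v X 0` are `⟪X - v, X⟫` and `|⟪v⊥, X⟫|`, so `c = ± cot ∠ v X 0`, the sign being that of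
`⟪v⊥, X⟫`. As `X` is interior to the triangle, `⟪a⊥, X⟫ > 0` and `⟪b⊥, X⟫ < 0`.
-/

open RealInnerProductSpace

theorem inner_pos_of_mem_interior_convexHull {E : Type*} [NormedAddCommGroup E]
    [InnerProductSpace ℝ E] [CompleteSpace E] {w x : E} {S : Set E} (hw : w ≠ 0)
    (hS : ∀ p ∈ S, 0 ≤ ⟪w, p⟫) (hx : x ∈ interior (convexHull ℝ S)) : 0 < ⟪w, x⟫ := by
  have hsurj : Function.Surjective (innerSL ℝ w) := fun t =>
    ⟨(t / ‖w‖ ^ 2) • w, by simp [norm_ne_zero_iff.2 hw]⟩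
  have hhull : convexHull ℝ S ⊆ innerSL ℝ w ⁻¹' Set.Ici 0 :=
    convexHull_min hS ((convex_Ici 0).linear_preimage (innerSL ℝ w).toLinearMap)
  have hx' := interior_mono hhull hx
  rwa [ContinuousLinearMap.interior_preimage _ hsurj, interior_Ici] at hx'

section perp

variable (u v : EuclideanSpace ℝ (Fin 2))

@[simp] theorem perp_apply_zero : perp v 0 = -v 1 := rfl

@[simp] theorem perp_apply_one : perp v 1 = v 0 := rfl

theorem inner_fin_two : ⟪u, v⟫ = u 0 * v 0 + u 1 * v 1 := by
  simp [PiLp.inner_apply, Fin.sum_univ_two, mul_comm]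

theorem dist_sq_fin_two : dist u v ^ 2 = (u 0 - v 0) ^ 2 + (u 1 - v 1) ^ 2 := by
  simp [EuclideanSpace.dist_eq, Fin.sum_univ_two, Real.dist_eq, sq_abs, Real.sq_sqrt, add_nonneg,
    sq_nonneg]

theorem perp_sub : perp (u - v) = perp u - perp v := by
  ext i; fin_cases i <;> simp [perp]; ring

theorem inner_perp_self : ⟪perp v, v⟫ = 0 := by
  rw [inner_fin_two]; simp; ring

theorem inner_perp_swap : ⟪perp u, v⟫ = -⟪perp v, u⟫ := by
  simp only [inner_fin_two, perp_apply_zero, perp_apply_one]; ring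

theorem inner_perp_sq : ⟪perp u, v⟫ ^ 2 = ⟪u, u⟫ * ⟪v, v⟫ - ⟪u, v⟫ * ⟪u, v⟫ := by
  simp only [inner_fin_two, perp_apply_zero, perp_apply_one]; ring

end perp

theorem sin_angle_mul_norm_mul_norm_eq_abs_inner_perp (u v : EuclideanSpace ℝ (Fin 2)) :
    Real.sin (InnerProductGeometry.angle u v) * (‖u‖ * ‖v‖) = |⟪perp u, v⟫| := by
  rw [InnerProductGeometry.sin_angle_mul_norm_mul_norm, ← inner_perp_sq, Real.sqrt_sq_eq_abs]

theorem cot_angle_mul_abs_inner_perp {u v : EuclideanSpace ℝ (Fin 2)} (h : ⟪perp u, v⟫ ≠ 0) :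
    Real.cot (InnerProductGeometry.angle u v) * |⟪perp u, v⟫| = ⟪u, v⟫ := by
  have hsin := sin_angle_mul_norm_mul_norm_eq_abs_inner_perp u v
  have hsin0 : Real.sin (InnerProductGeometry.angle u v) ≠ 0 := by
    rintro h0
    rw [h0, zero_mul, eq_comm, abs_eq_zero] at hsin
    exact h hsin
  rw [← hsin, ← InnerProductGeometry.cos_angle_mul_norm_mul_norm, Real.cot_eq_cos_div_sin]
  field_simp

theorem cot_angle_origin_mul_abs_inner_perp {v X : EuclideanSpace ℝ (Fin 2)}
    (h : ⟪perp v, X⟫ ≠ 0) : Real.cot (∠ v X 0) * |⟪perp v, X⟫| = ⟪X - v, X⟫ := by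
  have hperp : ⟪perp (v - X), 0 - X⟫ = -⟪perp v, X⟫ := by
    rw [perp_sub, zero_sub, inner_neg_right, inner_sub_left, inner_perp_self, sub_zero]
  have key : Real.cot (∠ v X 0) * |⟪perp (v - X), 0 - X⟫| = ⟪v - X, 0 - X⟫ :=
    cot_angle_mul_abs_inner_perp (u := v - X) (v := 0 - X) (by rwa [hperp, neg_ne_zero])
  rwa [hperp, abs_neg, zero_sub, inner_neg_right, ← inner_neg_left, neg_sub] at key

theorem dist_half_smul_add_smul_perp (v X : EuclideanSpace ℝ (Fin 2)) {c : ℝ}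
    (hX : c * ⟪perp v, X⟫ = ⟪X - v, X⟫) :
    let o := (1 / 2 : ℝ) • (v + c • perp v)
    let ρ := ‖v‖ / 2 * Real.sqrt (1 + c ^ 2)
    dist o X = ρ ∧ dist o 0 = ρ ∧ dist o v = ρ := by
  intro o ρ
  have hρ : ρ ^ 2 = (v 0 ^ 2 + v 1 ^ 2) * (1 + c ^ 2) / 4 := by
    simp only [ρ, mul_pow, div_pow, Real.sq_sqrt (by positivity : (0 : ℝ) ≤ 1 + c ^ 2),
      EuclideanSpace.norm_sq_eq, Fin.sum_univ_two, Real.norm_eq_abs, sq_abs]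
    ring
  have hX' : c * (-v 1 * X 0 + v 0 * X 1) = (X 0 - v 0) * X 0 + (X 1 - v 1) * X 1 := by
    simpa [inner_fin_two] using hX
  have hdist : ∀ p, dist o p ^ 2 = ρ ^ 2 → dist o p = ρ := fun p hp =>
    (pow_left_inj₀ dist_nonneg (by positivity) two_ne_zero).1 hp
  refine ⟨hdist _ ?_, hdist _ ?_, hdist _ ?_⟩ <;>
    simp only [hρ, dist_sq_fin_two, o, PiLp.smul_apply, PiLp.add_apply, perp_apply_zero,
      perp_apply_one, smul_eq_mul, PiLp.zero_apply]
  · linear_combination -hX'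
  · ring
  · ring

theorem circumcenters_formula_general (a b X : EuclideanSpace ℝ (Fin 2)) (ψa ψb : ℝ)
    (horient : 0 < (inner ℝ (perp a) b : ℝ))
    (hX : X ∈ interior (convexHull ℝ {(0 : EuclideanSpace ℝ (Fin 2)), a, b}))
    (hψa : ∠ a X (0 : EuclideanSpace ℝ (Fin 2)) = ψa)
    (hψb : ∠ (0 : EuclideanSpace ℝ (Fin 2)) X b = ψb) :
    let r := (1 / 2 : ℝ) • (a + Real.cot ψa • perp a)
    let s := (1 / 2 : ℝ) • (b - Real.cot ψb • perp b)
    let ρa := ‖a‖ / 2 * Real.sqrt (1 + Real.cot ψa ^ 2)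
    let ρb := ‖b‖ / 2 * Real.sqrt (1 + Real.cot ψb ^ 2)
    dist r X = ρa ∧ dist r (0 : EuclideanSpace ℝ (Fin 2)) = ρa ∧ dist r a = ρa ∧
    dist s X = ρb ∧ dist s (0 : EuclideanSpace ℝ (Fin 2)) = ρb ∧ dist s b = ρb := by
  have hba : 0 < ⟪-perp b, a⟫ := by rwa [inner_neg_left, ← inner_perp_swap]
  have hXa : 0 < ⟪perp a, X⟫ := by
    refine inner_pos_of_mem_interior_convexHull (by rintro h; simp [h] at horient) ?_ hX
    rintro p (rfl | rfl | rfl)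
    exacts [(inner_zero_right _).ge, (inner_perp_self _).ge, horient.le]
  have hXb : ⟪perp b, X⟫ < 0 := by
    rw [← neg_pos, ← inner_neg_left]
    refine inner_pos_of_mem_interior_convexHull (by rintro h; simp [h] at hba) ?_ hX
    rintro p (rfl | rfl | rfl)
    exacts [(inner_zero_right _).ge, hba.le, by rw [inner_neg_left, inner_perp_self, neg_zero]]
  have hr := cot_angle_origin_mul_abs_inner_perp hXa.ne'
  have hs := cot_angle_origin_mul_abs_inner_perp hXb.ne
  rw [hψa, abs_of_pos hXa] at hr
  rw [angle_comm, hψb, abs_of_neg hXb, mul_neg, ← neg_mul] at hs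
  obtain ⟨hrX, hr0, hra⟩ := dist_half_smul_add_smul_perp a X hr
  obtain ⟨hsX, hs0, hsb⟩ := dist_half_smul_add_smul_perp b X hs
  simp only [neg_smul, ← sub_eq_add_neg, neg_sq] at hsX hs0 hsb
  exact ⟨hrX, hr0, hra, hsX, hs0, hsb⟩

theorem circumcenters_formula (a b X : EuclideanSpace ℝ (Fin 2)) (ψa ψb : ℝ)
    (hab : LinearIndependent ℝ ![a, b])
    (horient : 0 < (inner ℝ (perp a) b : ℝ))
    (hX : X ∈ interior (convexHull ℝ {(0 : EuclideanSpace ℝ (Fin 2)), a, b}))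
    (hψa : ∠ a X (0 : EuclideanSpace ℝ (Fin 2)) = ψa)
    (hψb : ∠ (0 : EuclideanSpace ℝ (Fin 2)) X b = ψb)
    (hψa1 : Real.pi / 2 < ψa) (hψa2 : ψa < Real.pi)
    (hψb1 : Real.pi / 2 < ψb) (hψb2 : ψb < Real.pi) :
    let r := (1 / 2 : ℝ) • (a + Real.cot ψa • perp a)
    let s := (1 / 2 : ℝ) • (b - Real.cot ψb • perp b)
    let ρa := ‖a‖ / 2 * Real.sqrt (1 + Real.cot ψa ^ 2)
    let ρb := ‖b‖ / 2 * Real.sqrt (1 + Real.cot ψb ^ 2)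
    dist r X = ρa ∧ dist r (0 : EuclideanSpace ℝ (Fin 2)) = ρa ∧ dist r a = ρa ∧
    dist s X = ρb ∧ dist s (0 : EuclideanSpace ℝ (Fin 2)) = ρb ∧ dist s b = ρb :=
  circumcenters_formula_general a b X ψa ψb horient hX hψa hψb
end
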